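/- Let m ≥ 1 be a natural number. Then (2m − 1) · Σ_{x ∈ B_{m,m}} τ(x)² = m · (2m² − 1) · C(2m, m), where C(2m, m) denotes the central binomial coefficient. Equivalently, if X is sampled uniformly at random from B_{m,m}, then E[τ(X)²] = m(2m² − 1)/(2m − 1). -/

import Mathlib

/-!
Expanding `τ(x)² = ∑ᵢ ∑ⱼ [x jumps at i][x jumps at j]` and exchanging the sums, it suffices to
count the sequences in `B_{n0,n1}` with jumps at two given places `i, j`. Fixing the values of
`x` at `k` positions, `f` of them zeros, leaves `C(n - k, n0 - f)` sequences, so this count is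
`2 C(n-2, n0-1)` for `i = j`, `C(n-3, n0-2) + C(n-3, n0-1) = C(n-2, n0-1)` for `|i - j| = 1` and
`4 C(n-4, n0-2)` otherwise. For `n0 = n1 = m` these are central binomial coefficients, and
summing over the `(2m-1)²` pairs gives `∑ τ² = 2 (2m² - 1) C(2m-2, m-1)`; the recursion
`m C(2m, m) = 2 (2m-1) C(2m-2, m-1)` finishes the proof.
-/

open Finset

/-- The number of jumps `τ(x) = |{i ∈ [n-1] : x_i ≠ x_{i+1}}|` of a binary sequence
`x ∈ {0,1}^n`. -/
def tau {n : ℕ} (x : Fin n → Bool) : ℕ :=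
  (Finset.univ.filter (fun i : Fin n =>
    ∃ h : (i : ℕ) + 1 < n, x i ≠ x ⟨(i : ℕ) + 1, h⟩)).card

/-- `B_{n0,n1}`, the set of binary sequences of length `n0 + n1` with exactly
`n0` zeros and `n1` ones. -/
def Bseq (n0 n1 : ℕ) : Finset (Fin (n0 + n1) → Bool) :=
  Finset.univ.filter (fun x =>
    (Finset.univ.filter (fun i => x i = false)).card = n0 ∧
    (Finset.univ.filter (fun i => x i = true)).card = n1)

theorem mem_Bseq {n0 n1 : ℕ} {x : Fin (n0 + n1) → Bool} :
    x ∈ Bseq n0 n1 ↔ #{i | x i = false} = n0 := by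
  have h := card_filter_add_card_filter_not (s := univ) (fun i => x i = false)
  simp only [Bool.not_eq_false, card_univ, Fintype.card_fin] at h
  simp only [Bseq, mem_filter, mem_univ, true_and]
  omega

-- `x ↦ {i | x i = false}` maps these sequences bijectively onto the `n0`-subsets of `Tᶜ`
-- containing `F`.
theorem card_filter_Bseq_prescribed {n0 n1 : ℕ} {F T : Finset (Fin (n0 + n1))}
    (hFT : Disjoint F T) (hF : #F ≤ n0) :
    #{x ∈ Bseq n0 n1 | (∀ i ∈ F, x i = false) ∧ ∀ i ∈ T, x i = true} =
      (n0 + n1 - #T - #F).choose (n0 - #F) := by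
  rw [show n0 + n1 - #T = #Tᶜ by simp [card_compl],
    ← card_filter_powersetCard_subset F Tᶜ n0 (subset_compl_iff_disjoint_right.2 hFT) hF]
  refine card_nbij' (fun x => ({i | x i = false} : Finset _)) (fun S i => decide (i ∉ S))
    ?_ ?_ ?_ ?_
  · intro x hx
    simp only [coe_filter, mem_Bseq, Set.mem_ofPred_eq, mem_powersetCard] at hx ⊢
    obtain ⟨hcard, hxF, hxT⟩ := hx
    refine ⟨⟨fun i hi => mem_compl.2 fun hiT => ?_, hcard⟩, fun i hi => by simp [hxF i hi]⟩
    simp [hxT i hiT] at hi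
  · intro S hS
    simp only [coe_filter, mem_Bseq, Set.mem_ofPred_eq, mem_powersetCard] at hS ⊢
    obtain ⟨⟨hST, hcard⟩, hFS⟩ := hS
    simp only [decide_eq_false_iff_not, decide_eq_true_eq, not_not, filter_mem_eq_inter,
      univ_inter]
    exact ⟨hcard, hFS, fun i hiT hiS => mem_compl.1 (hST hiS) hiT⟩
  · intro x _
    funext i
    simp
  · intro S _
    ext i
    simp

section PatternCounts

variable {n0 n1 : ℕ} {a b c d : Fin (n0 + n1)}

theorem card_filter_Bseq_ne (hab : a ≠ b) (hn0 : 1 ≤ n0) :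
    #{x ∈ Bseq n0 n1 | x a ≠ x b} = 2 * (n0 + n1 - 2).choose (n0 - 1) := by
  have h01 := card_filter_Bseq_prescribed (F := {a}) (T := {b}) (by simpa) (by simpa)
  have h10 := card_filter_Bseq_prescribed (F := {b}) (T := {a}) (by simpa using hab.symm)
    (by simpa)
  simp only [mem_singleton, forall_eq, card_singleton, Nat.sub_sub, Nat.reduceAdd] at h01 h10
  have hsplit : #{x ∈ Bseq n0 n1 | x a ≠ x b} =
      #{x ∈ Bseq n0 n1 | x a = false ∧ x b = true} +
        #{x ∈ Bseq n0 n1 | x b = false ∧ x a = true} := by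
    simp only [card_filter, ← sum_add_distrib]
    refine sum_congr rfl fun x _ => ?_
    cases x a <;> cases x b <;> simp
  rw [hsplit, h01, h10, two_mul]

theorem card_filter_Bseq_ne_ne (hab : a ≠ b) (hac : a ≠ c) (hbc : b ≠ c) (hn0 : 2 ≤ n0) :
    #{x ∈ Bseq n0 n1 | x a ≠ x b ∧ x b ≠ x c} = (n0 + n1 - 2).choose (n0 - 1) := by
  have h010 := card_filter_Bseq_prescribed (F := {a, c}) (T := {b}) (by simp [hab.symm, hbc])
    (by rw [card_pair hac]; exact hn0)
  have h101 := card_filter_Bseq_prescribed (F := {b}) (T := {a, c}) (by simp [hab.symm, hbc])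
    (by simp; omega)
  simp only [mem_insert, mem_singleton, forall_eq_or_imp, forall_eq, card_singleton,
    card_pair hac, Nat.sub_sub, Nat.reduceAdd] at h010 h101
  have hsplit : #{x ∈ Bseq n0 n1 | x a ≠ x b ∧ x b ≠ x c} =
      #{x ∈ Bseq n0 n1 | (x a = false ∧ x c = false) ∧ x b = true} +
        #{x ∈ Bseq n0 n1 | x b = false ∧ x a = true ∧ x c = true} := by
    simp only [card_filter, ← sum_add_distrib]
    refine sum_congr rfl fun x _ => ?_
    cases x a <;> cases x b <;> cases x c <;> simp
  have hn : 3 ≤ n0 + n1 := by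
    simpa [card_insert_of_notMem, hab, hac, hbc] using card_le_univ {a, b, c}
  rw [hsplit, h010, h101, show n0 + n1 - 2 = n0 + n1 - 3 + 1 by omega,
    show n0 - 1 = n0 - 2 + 1 by omega, Nat.choose_succ_succ']

theorem card_filter_Bseq_ne_and_ne (hab : a ≠ b) (hac : a ≠ c) (had : a ≠ d) (hbc : b ≠ c)
    (hbd : b ≠ d) (hcd : c ≠ d) (hn0 : 2 ≤ n0) :
    #{x ∈ Bseq n0 n1 | x a ≠ x b ∧ x c ≠ x d} = 4 * (n0 + n1 - 4).choose (n0 - 2) := by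
  have count {p q r t : Fin (n0 + n1)} (hpq : p ≠ q) (hrt : r ≠ t) (hpr : p ≠ r) (hpt : p ≠ t)
      (hqr : q ≠ r) (hqt : q ≠ t) :
      #{x ∈ Bseq n0 n1 | (x p = false ∧ x q = false) ∧ x r = true ∧ x t = true} =
        (n0 + n1 - 4).choose (n0 - 2) := by
    have h := card_filter_Bseq_prescribed (F := {p, q}) (T := {r, t})
      (by simp [hpr.symm, hpt.symm, hqr.symm, hqt.symm]) (by rw [card_pair hpq]; exact hn0)
    simpa only [mem_insert, mem_singleton, forall_eq_or_imp, forall_eq, card_pair hpq,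
      card_pair hrt, Nat.sub_sub, Nat.reduceAdd] using h
  have hsplit : #{x ∈ Bseq n0 n1 | x a ≠ x b ∧ x c ≠ x d} =
      #{x ∈ Bseq n0 n1 | (x a = false ∧ x c = false) ∧ x b = true ∧ x d = true} +
      #{x ∈ Bseq n0 n1 | (x a = false ∧ x d = false) ∧ x b = true ∧ x c = true} +
      #{x ∈ Bseq n0 n1 | (x b = false ∧ x c = false) ∧ x a = true ∧ x d = true} +
      #{x ∈ Bseq n0 n1 | (x b = false ∧ x d = false) ∧ x a = true ∧ x c = true} := by
    simp only [card_filter, ← sum_add_distrib]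
    refine sum_congr rfl fun x _ => ?_
    cases x a <;> cases x b <;> cases x c <;> cases x d <;> simp
  rw [hsplit, count hac hbd hab had hbc.symm hcd, count had hbc hab hac hbd.symm hcd.symm,
    count hbc had hab.symm hbd hac.symm hcd, count hbd hac hab.symm hbc had.symm hcd.symm]
  ring

end PatternCounts

theorem tau_eq_card_castSucc_ne_succ {N : ℕ} (x : Fin (N + 1) → Bool) :
    tau x = #{i : Fin N | x i.castSucc ≠ x i.succ} := by
  rw [tau, ← card_map Fin.castSuccEmb (s := {i : Fin N | x i.castSucc ≠ x i.succ})]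
  refine congrArg card ?_
  ext i
  induction i using Fin.lastCases with
  | last => simp
  | cast j => simp [Fin.succ, Fin.castSucc]

theorem sum_tau_sq_eq_sum_card_filter_jump_and_jump {N : ℕ}
    (s : Finset (Fin (N + 1) → Bool)) :
    ∑ x ∈ s, tau x ^ 2 =
      ∑ i : Fin N, ∑ j : Fin N, #{x ∈ s | x i.castSucc ≠ x i.succ ∧ x j.castSucc ≠ x j.succ} := by
  simp only [tau_eq_card_castSucc_ne_succ, sq, card_filter, sum_mul_sum, ite_zero_mul_ite_zero,
    mul_one]
  rw [sum_comm]
  exact sum_congr rfl fun i _ => sum_comm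

def gapWeight (A B C i j : ℕ) : ℕ :=
  if i = j then A else if i + 1 = j ∨ j + 1 = i then B else C

theorem sum_range_sum_range_gapWeight (A B C N : ℕ) :
    ∑ i ∈ range N, ∑ j ∈ range N, gapWeight A B C i j =
      N * A + 2 * (N - 1) * B + (N - 1) * (N - 2) * C := by
  obtain _ | _ | N := N
  · simp
  · simp [gapWeight]
  have hw (i j : ℕ) : (gapWeight A B C i j : ℤ) =
      C + (if i = j then (A - C : ℤ) else 0) + (if i + 1 = j then (B - C : ℤ) else 0) +
        (if j + 1 = i then (B - C : ℤ) else 0) := by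
    unfold gapWeight
    split_ifs <;> first | (exfalso; omega) | ring
  have hdiag : {i ∈ range (N + 2) | i < N + 2} = range (N + 2) :=
    filter_true_of_mem fun _ => mem_range.1
  have hadj : {i ∈ range (N + 2) | i + 1 < N + 2} = range (N + 1) := by
    ext; simp only [mem_filter, mem_range]; omega
  rw [← Nat.cast_inj (R := ℤ)]
  simp only [Nat.cast_sum, hw, sum_add_distrib, sum_ite_eq, sum_const, card_range]
  rw [sum_comm (f := fun i j => if j + 1 = i then (B - C : ℤ) else 0)]
  simp only [sum_ite_eq, mem_range, ← sum_filter, sum_const, nsmul_eq_mul, hdiag, hadj,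
    card_range]
  push_cast
  ring

section JumpStatistics

variable {N A B C : ℕ} {s : Finset (Fin (N + 1) → Bool)}

theorem card_filter_jump_and_jump
    (hA : ∀ a b, a ≠ b → #{x ∈ s | x a ≠ x b} = A)
    (hB : ∀ a b c, a ≠ b → a ≠ c → b ≠ c → #{x ∈ s | x a ≠ x b ∧ x b ≠ x c} = B)
    (hC : ∀ a b c d, a ≠ b → a ≠ c → a ≠ d → b ≠ c → b ≠ d → c ≠ d →
      #{x ∈ s | x a ≠ x b ∧ x c ≠ x d} = C) (i j : Fin N) :
    #{x ∈ s | x i.castSucc ≠ x i.succ ∧ x j.castSucc ≠ x j.succ} = gapWeight A B C i j := by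
  unfold gapWeight
  split_ifs with hij hadj
  · obtain rfl := Fin.ext hij
    simpa only [and_self] using hA _ _ Fin.castSucc_lt_succ.ne
  · rcases hadj with hadj | hadj
    · have hij : i.succ = j.castSucc := Fin.ext (by simp [hadj])
      simp only [hij]
      refine hB _ _ _ ?_ ?_ ?_ <;> simp [Fin.ext_iff] <;> omega
    · have hji : j.succ = i.castSucc := Fin.ext (by simp [hadj])
      rw [filter_congr fun x _ => and_comm]
      simp only [hji]
      refine hB _ _ _ ?_ ?_ ?_ <;> simp [Fin.ext_iff] <;> omega
  · refine hC _ _ _ _ ?_ ?_ ?_ ?_ ?_ ?_ <;> simp [Fin.ext_iff] <;> omega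

theorem sum_tau_sq_eq_of_card_filter
    (hA : ∀ a b, a ≠ b → #{x ∈ s | x a ≠ x b} = A)
    (hB : ∀ a b c, a ≠ b → a ≠ c → b ≠ c → #{x ∈ s | x a ≠ x b ∧ x b ≠ x c} = B)
    (hC : ∀ a b c d, a ≠ b → a ≠ c → a ≠ d → b ≠ c → b ≠ d → c ≠ d →
      #{x ∈ s | x a ≠ x b ∧ x c ≠ x d} = C) :
    ∑ x ∈ s, tau x ^ 2 = N * A + 2 * (N - 1) * B + (N - 1) * (N - 2) * C := by
  rw [sum_tau_sq_eq_sum_card_filter_jump_and_jump, ← sum_range_sum_range_gapWeight,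
    ← Fin.sum_univ_eq_sum_range]
  simp only [card_filter_jump_and_jump hA hB hC]
  exact sum_congr rfl fun i _ => Fin.sum_univ_eq_sum_range (gapWeight A B C i) N

end JumpStatistics

theorem sum_tau_sq_Bseq_self_succ (m : ℕ) :
    ∑ x ∈ Bseq (m + 1) (m + 1), tau x ^ 2 = 2 * (2 * (m + 1) ^ 2 - 1) * m.centralBinom := by
  obtain _ | k := m
  · decide
  have hK : (k + 2 + (k + 2) - 2).choose (k + 2 - 1) = (k + 1).centralBinom := by
    rw [Nat.centralBinom]; congr 1; omega
  have hL : (k + 2 + (k + 2) - 4).choose (k + 2 - 2) = k.centralBinom := by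
    rw [Nat.centralBinom]; congr 1; omega
  have hsum := sum_tau_sq_eq_of_card_filter (N := k + 2 + (k + 1)) (s := Bseq (k + 2) (k + 2))
    (A := 2 * (k + 1).centralBinom) (B := (k + 1).centralBinom) (C := 4 * k.centralBinom)
    (fun a b hab =>
      (card_filter_Bseq_ne (n0 := k + 2) (n1 := k + 2) hab (by omega)).trans (by rw [hK]))
    (fun a b c hab hac hbc =>
      (card_filter_Bseq_ne_ne (n0 := k + 2) (n1 := k + 2) hab hac hbc (by omega)).trans hK)
    (fun a b c d hab hac had hbc hbd hcd =>
      (card_filter_Bseq_ne_and_ne (n0 := k + 2) (n1 := k + 2) hab hac had hbc hbd hcd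
        (by omega)).trans (by rw [hL]))
  have hrec := Nat.succ_mul_centralBinom_succ k
  refine hsum.trans ?_
  rw [show k + 2 + (k + 1) - 1 = 2 * (k + 1) by omega,
    show k + 2 + (k + 1) - 2 = 2 * k + 1 by omega,
    show 2 * (k + 1 + 1) ^ 2 - 1 = 2 * k ^ 2 + 8 * k + 7 from Nat.sub_eq_of_eq_add (by ring)]
  zify at hrec ⊢
  linear_combination (-4 * ((k : ℤ) + 1)) * hrec

theorem stmt_7 (m : ℕ) (hm : 1 ≤ m) :
    (2 * m - 1) * ∑ x ∈ Bseq m m, (tau x) ^ 2 =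
      m * (2 * m ^ 2 - 1) * Nat.choose (2 * m) m := by
  obtain ⟨k, rfl⟩ : ∃ k, m = k + 1 := ⟨m - 1, by omega⟩
  rw [sum_tau_sq_Bseq_self_succ, ← Nat.centralBinom_eq_two_mul_choose, mul_right_comm (k + 1),
    Nat.succ_mul_centralBinom_succ, show 2 * (k + 1) - 1 = 2 * k + 1 by omega]
  ring
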